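/- arXiv:2102.13562 — 2 statements merged into one kernel-verified Lean document; each statement's English description precedes it below -/
import Mathlib

section
/- [Claim 1 in the proof of Lemma 1] Let (λ_s, π_s)_{s∈S} be an optimal splitting of the prior π° ∈ Δ(Ω). Then for every μ ∈ Δ(S), ū(Σ_{s∈S} μ_s π_s) ≤ Σ_{s∈S} μ_s ū(π_s). -/
open Finset

variable {Ω A : Type*}

/-- Expected payoff of mixed action `α` at belief `π` (bilinear extension of `u`). -/
noncomputable def pay [Fintype Ω] [Fintype A] (u : A → Ω → ℝ) (α : A → ℝ) (π : Ω → ℝ) : ℝ :=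
  ∑ a, ∑ ω, α a * π ω * u a ω

/-- Expected payoff of pure action `a` at belief `π`. -/
noncomputable def payP [Fintype Ω] (u : A → Ω → ℝ) (a : A) (π : Ω → ℝ) : ℝ :=
  ∑ ω, π ω * u a ω

/-- Pure best replies of the decision-maker at belief `π`. -/
def br [Fintype Ω] (v : A → Ω → ℝ) (π : Ω → ℝ) : Set A :=
  {a | ∀ a', payP v a' π ≤ payP v a π}

/-- Mixed best replies of the decision-maker at belief `π`. -/
def BR [Fintype Ω] [Fintype A] (v : A → Ω → ℝ) (π : Ω → ℝ) : Set (A → ℝ) :=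
  {α ∈ stdSimplex ℝ A | ∀ α' ∈ stdSimplex ℝ A, pay v α' π ≤ pay v α π}

/-- The expert value function `ū(π) = max_{α ∈ BR(π)} u(α, π)`. -/
noncomputable def ubar [Fintype Ω] [Fintype A] (u v : A → Ω → ℝ) (π : Ω → ℝ) : ℝ :=
  sSup ((fun α => pay u α π) '' BR v π)

/-- The decision-maker value function `v̄(π) = max_a v(a, π)`. -/
noncomputable def vbar [Fintype Ω] [Fintype A] (v : A → Ω → ℝ) (π : Ω → ℝ) : ℝ :=
  ⨆ a, payP v a π

/-- Actions that are a best reply to some belief. -/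
def Ahat [Fintype Ω] [Fintype A] (v : A → Ω → ℝ) : Set A :=
  {a | ∃ π ∈ stdSimplex ℝ Ω, a ∈ br v π}

/-- Mixed actions supported on `B`. -/
def simplexOn [Fintype A] (B : Set A) : Set (A → ℝ) :=
  {α | α ∈ stdSimplex ℝ A ∧ ∀ a ∉ B, α a = 0}

/-- `(lam, p)` is a splitting of the prior. -/
def IsSplitting [Fintype Ω] {S : Type*} [Fintype S] (lam : S → ℝ) (p : S → Ω → ℝ)
    (prior : Ω → ℝ) : Prop :=
  (∀ s, 0 < lam s) ∧ (∑ s, lam s) = 1 ∧ (∀ s, p s ∈ stdSimplex ℝ Ω) ∧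
    ∀ ω, (∑ s, lam s * p s ω) = prior ω

/-- `(lam, p)` is an optimal splitting of the prior: it attains `cav ū (prior)`. -/
def IsOptimalSplitting [Fintype Ω] [Fintype A] (u v : A → Ω → ℝ) {S : Type*} [Fintype S]
    (lam : S → ℝ) (p : S → Ω → ℝ) (prior : Ω → ℝ) : Prop :=
  IsSplitting lam p prior ∧
    ∀ (T : Type) [Fintype T] [Nonempty T] (mu : T → ℝ) (q : T → Ω → ℝ),
      IsSplitting mu q prior →
        (∑ t, mu t * ubar u v (q t)) ≤ ∑ s, lam s * ubar u v (p s)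

/-
Optimality of `(λ, π)` is tested against a perturbed splitting: shift mass `t μ_s` away from each
`π_s` and put the total mass `t` on the mixture `π_μ = ∑ μ_s π_s`. For small `t > 0` the weights
stay positive and the barycentre is unchanged, and optimality gives
`t ū(π_μ) - t ∑ μ_s ū(π_s) ≤ 0`.
-/

lemma exists_pos_forall_lt_of_pos {ι : Type*} [Finite ι] {f : ι → ℝ} (hf : ∀ i, 0 < f i) :
    ∃ t, 0 < t ∧ ∀ i, t < f i := by
  have h : ∀ᶠ t in nhdsWithin (0 : ℝ) (Set.Ioi 0), 0 < t ∧ ∀ i, t < f i :=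
    Filter.Eventually.and self_mem_nhdsWithin <| Filter.eventually_all.2 fun i =>
      eventually_nhdsWithin_of_eventually_nhds (eventually_lt_nhds (hf i))
  exact h.exists

section Splitting

variable [Fintype Ω] {S T : Type*} [Fintype S] [Fintype T]
  {lam : S → ℝ} {p : S → Ω → ℝ} {prior : Ω → ℝ}

lemma IsSplitting.comp_equiv (h : IsSplitting lam p prior) (e : T ≃ S) :
    IsSplitting (lam ∘ e) (p ∘ e) prior := by
  obtain ⟨hpos, hsum, hmem, hbary⟩ := h
  refine ⟨fun t => hpos (e t), ?_, fun t => hmem (e t), fun ω => ?_⟩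
  · rw [← hsum]; exact e.sum_comp lam
  · rw [← hbary ω]; exact e.sum_comp fun s => lam s * p s ω

lemma mixture_mem_stdSimplex {μ : S → ℝ} (hμ : μ ∈ stdSimplex ℝ S)
    (hp : ∀ s, p s ∈ stdSimplex ℝ Ω) : (fun ω => ∑ s, μ s * p s ω) ∈ stdSimplex ℝ Ω := by
  have h := (convex_stdSimplex ℝ Ω).sum_mem (t := univ) (fun s _ => hμ.1 s) hμ.2
    fun s _ => hp s
  convert h using 1
  ext ω
  simp [Finset.sum_apply]

lemma IsSplitting.perturb (h : IsSplitting lam p prior) {μ : S → ℝ} (hμ : μ ∈ stdSimplex ℝ S)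
    {t : ℝ} (ht : 0 < t) (htlam : ∀ s, t < lam s) :
    IsSplitting (fun o : Option S => o.elim t fun s => lam s - t * μ s)
      (fun o : Option S => o.elim (fun ω => ∑ s, μ s * p s ω) p) prior := by
  obtain ⟨hpos, hsum, hmem, hbary⟩ := h
  refine ⟨?_, ?_, ?_, fun ω => ?_⟩
  · rintro (_ | s)
    · exact ht
    · have : μ s ≤ 1 := hμ.2 ▸ single_le_sum (fun i _ => hμ.1 i) (mem_univ s)
      simp only [Option.elim]
      nlinarith [htlam s]
  · simp only [Fintype.sum_option, Option.elim, sum_sub_distrib, ← mul_sum, hsum, hμ.2]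
    ring
  · rintro (_ | s)
    · exact mixture_mem_stdSimplex hμ hmem
    · exact hmem s
  · simp only [Fintype.sum_option, Option.elim, mul_sum, ← hbary ω, ← sum_add_distrib]
    exact sum_congr rfl fun s _ => by ring

end Splitting

lemma IsOptimalSplitting.sum_le [Fintype Ω] [Fintype A] {u v : A → Ω → ℝ}
    {S T : Type*} [Fintype S] [Fintype T] [Nonempty T] {lam : S → ℝ} {p : S → Ω → ℝ}
    {prior : Ω → ℝ} (hopt : IsOptimalSplitting u v lam p prior) {mu : T → ℝ}
    {q : T → Ω → ℝ} (h : IsSplitting mu q prior) :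
    ∑ t, mu t * ubar u v (q t) ≤ ∑ s, lam s * ubar u v (p s) := by
  let e := (Fintype.equivFin T).symm
  have : Nonempty (Fin (Fintype.card T)) := ⟨⟨0, Fintype.card_pos⟩⟩
  rw [← e.sum_comp]
  exact hopt.2 _ (mu ∘ e) (q ∘ e) (h.comp_equiv e)

theorem claim1_general {Ω A S : Type*} [Fintype Ω] [Fintype A]
    [Fintype S] (u v : A → Ω → ℝ) (prior : Ω → ℝ)
    (lam : S → ℝ) (p : S → Ω → ℝ) (hopt : IsOptimalSplitting u v lam p prior) :
    ∀ μ ∈ stdSimplex ℝ S,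
      ubar u v (fun ω => ∑ s, μ s * p s ω) ≤ ∑ s, μ s * ubar u v (p s) := by
  intro μ hμ
  obtain ⟨t, ht, htlam⟩ := exists_pos_forall_lt_of_pos hopt.1.1
  have key := hopt.sum_le (hopt.1.perturb hμ ht htlam)
  simp only [Fintype.sum_option, Option.elim, sub_mul, sum_sub_distrib, mul_assoc,
    ← mul_sum] at key
  exact le_of_mul_le_mul_left (by linarith) ht

/-- Claim 1 in the proof of Lemma 1. -/
theorem claim1 {Ω A S : Type*} [Fintype Ω] [Nonempty Ω] [Fintype A] [Nonempty A]
    [Fintype S] [Nonempty S] (u v : A → Ω → ℝ) (prior : Ω → ℝ) (hprior : prior ∈ stdSimplex ℝ Ω)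
    (lam : S → ℝ) (p : S → Ω → ℝ) (hopt : IsOptimalSplitting u v lam p prior) :
    ∀ μ ∈ stdSimplex ℝ S,
      ubar u v (fun ω => ∑ s, μ s * p s ω) ≤ ∑ s, μ s * ubar u v (p s) :=
  claim1_general u v prior lam p hopt
end

section
/- [Supporting hyperplane step in the proof of Claim 1] Let (λ_s, π_s)_{s∈S} be an optimal splitting of the prior π° ∈ Δ(Ω). Then there exists an affine function h : (Ω → ℝ) → ℝ such that ū(π) ≤ h(π) for all π ∈ Δ(Ω) and h(π_s) = ū(π_s) for every s ∈ S. -/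
open Finset

variable {Ω A : Type*}

/-!
On each region `{π ∈ Δ(Ω) | a ∈ br v π}` the value `ū` is at least the linear function
`π ↦ u(a, π)`, and `ū` is the pointwise maximum of these pieces. Each region is a polytope, so the
concavification of `ū` is the concave envelope of the finitely many points `(π, u(a, π))` with `π`
a vertex of the region of `a`. Optimality of the splitting says that no nonnegative combination of
these points averaging to the prior beats the optimal value; by Farkas' lemma this is exactly the
existence of an affine majorant of those points (hence of `ū`) which equals the optimal value at
the prior. Averaging over the splitting then forces equality at each posterior.
-/

open Matrix Filter Topology

theorem Set.Finite.exists_mem_upperBounds_mem_lowerBounds {α : Type*} [LinearOrder α]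
    [Nonempty α] {s t : Set α} (hs : s.Finite) (ht : t.Finite) (H : ∀ x ∈ s, ∀ y ∈ t, x ≤ y) :
    ∃ b, b ∈ upperBounds s ∧ b ∈ lowerBounds t := by
  rcases s.eq_empty_or_nonempty with rfl | hne
  · obtain ⟨b, hb⟩ := ht.bddBelow
    exact ⟨b, by simp, hb⟩
  · obtain ⟨b, hbs, hb⟩ := Set.exists_max_image s id hs hne
    exact ⟨b, hb, fun y hy => H b hbs y hy⟩

section FourierMotzkin

variable {𝕜 m n : Type*} [Field 𝕜] [LinearOrder 𝕜]

/-- The back-substitution step of Fourier–Motzkin elimination. -/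
theorem exists_le_mul_of_pairwise [IsStrictOrderedRing 𝕜] [Finite m] {s a : m → 𝕜}
    (hzero : ∀ k, a k = 0 → s k ≤ 0)
    (hpair : ∀ k l, 0 < a k → a l < 0 → -a l * s k + a k * s l ≤ 0) :
    ∃ γ, ∀ k, s k ≤ γ * a k := by
  obtain ⟨γ, hlow, hup⟩ := Set.Finite.exists_mem_upperBounds_mem_lowerBounds
    (Set.toFinite ((fun k => s k / a k) '' {k | 0 < a k}))
    (Set.toFinite ((fun k => s k / a k) '' {k | a k < 0})) (by
      rintro _ ⟨k, hk, rfl⟩ _ ⟨l, hl, rfl⟩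
      have hk : 0 < a k := hk
      have hl : a l < 0 := hl
      rw [le_div_iff_of_neg hl, div_mul_eq_mul_div, le_div_iff₀ hk]
      linarith [hpair k l hk hl])
  refine ⟨γ, fun k => ?_⟩
  rcases lt_trichotomy (a k) 0 with hk | hk | hk
  · exact (le_div_iff_of_neg hk).1 (hup ⟨k, hk, rfl⟩)
  · simpa [hk] using hzero k hk
  · exact (div_le_iff₀ hk).1 (hlow ⟨k, hk, rfl⟩)

/-- Fourier–Motzkin elimination of column `j`, as a matrix of row operations on `A`. -/
def fourierMotzkin [DecidableEq m] (A : Matrix m n 𝕜) (j : n) :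
    Matrix ({p : m × m // 0 < A p.1 j ∧ A p.2 j < 0} ⊕ {k : m // A k j = 0}) m 𝕜 :=
  of <| Sum.elim
    (fun p => (-A p.1.2 j) • Pi.single p.1.1 1 + A p.1.1 j • Pi.single p.1.2 1)
    (fun k => Pi.single k.1 1)

variable [DecidableEq m]

theorem fourierMotzkin_nonneg [IsStrictOrderedRing 𝕜] (A : Matrix m n 𝕜) (j : n) (r) (i : m) :
    0 ≤ fourierMotzkin A j r i := by
  have hsingle (k : m) : 0 ≤ (Pi.single k (1 : 𝕜) : m → 𝕜) i := by
    rw [Pi.single_apply]; split_ifs <;> norm_num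
  rcases r with ⟨⟨k, l⟩, hk, hl⟩ | ⟨k, -⟩
  · have : 0 ≤ -A l j := by linarith
    simp only [fourierMotzkin, of_apply, Sum.elim_inl, Pi.add_apply, Pi.smul_apply, smul_eq_mul]
    exact add_nonneg (mul_nonneg this (hsingle k)) (mul_nonneg hk.le (hsingle l))
  · exact hsingle k

variable [Fintype m]

theorem fourierMotzkin_mulVec_inl (A : Matrix m n 𝕜) (j : n) (s : m → 𝕜) (p) :
    (fourierMotzkin A j *ᵥ s) (Sum.inl p) = -A p.1.2 j * s p.1.1 + A p.1.1 j * s p.1.2 := by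
  simp only [mulVec, fourierMotzkin, of_apply, Sum.elim_inl, add_dotProduct, smul_dotProduct,
    single_one_dotProduct, smul_eq_mul]

theorem fourierMotzkin_mulVec_inr (A : Matrix m n 𝕜) (j : n) (s : m → 𝕜) (k) :
    (fourierMotzkin A j *ᵥ s) (Sum.inr k) = s k := by
  simp only [mulVec, fourierMotzkin, of_apply, Sum.elim_inr, single_one_dotProduct]

theorem fourierMotzkin_mul_apply_self (A : Matrix m n 𝕜) (j : n) (r) :
    (fourierMotzkin A j * A) r j = 0 := by
  change (fourierMotzkin A j *ᵥ fun k => A k j) r = 0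
  rcases r with p | k
  · rw [fourierMotzkin_mulVec_inl]; ring
  · rw [fourierMotzkin_mulVec_inr]; exact k.2

omit [DecidableEq m] in
theorem forall_vecMul_eq_zero_of_nonneg_mul [IsStrictOrderedRing 𝕜] {m' : Type*} [Fintype m']
    {A : Matrix m n 𝕜} {b : m → 𝕜} {C : Matrix m' m 𝕜} (hC : ∀ r k, 0 ≤ C r k)
    (h : ∀ y, 0 ≤ y → y ᵥ* A = 0 → y ⬝ᵥ b ≤ 0) :
    ∀ y, 0 ≤ y → y ᵥ* (C * A) = 0 → y ⬝ᵥ (C *ᵥ b) ≤ 0 := fun y hy hyCA => by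
  rw [dotProduct_mulVec]
  exact h _ (fun k => sum_nonneg fun r _ => mul_nonneg (hy r) (hC r k)) (by rwa [vecMul_vecMul])

omit [DecidableEq m] in
/-- **Farkas' lemma**, by Fourier–Motzkin elimination of one column at a time. -/
theorem Matrix.exists_le_mulVec_of_forall_vecMul_eq_zero [IsStrictOrderedRing 𝕜] [Fintype n]
    (A : Matrix m n 𝕜) (b : m → 𝕜) (h : ∀ y, 0 ≤ y → y ᵥ* A = 0 → y ⬝ᵥ b ≤ 0) :
    ∃ x, b ≤ A *ᵥ x := by
  classical
  suffices ∀ D : Finset n, (∀ k, ∀ i ∉ D, A k i = 0) → ∃ x, b ≤ A *ᵥ x from this univ (by simp)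
  intro D
  induction D using Finset.induction_on generalizing m with
  | empty =>
    intro hA
    refine ⟨0, fun k => ?_⟩
    have hA0 : A = 0 := by ext k i; simpa using hA k i
    simpa [hA0] using h (Pi.single k 1) (Pi.single_nonneg.2 zero_le_one) (by simp [hA0])
  | insert j D hj IH =>
    intro hA
    set C := fourierMotzkin A j
    obtain ⟨x, hx⟩ := IH (C * A) (C *ᵥ b)
      (forall_vecMul_eq_zero_of_nonneg_mul (fourierMotzkin_nonneg A j) h) fun r i hi => by
        by_cases hij : i = j
        · rw [hij]; exact fourierMotzkin_mul_apply_self A j r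
        · simp [mul_apply, hA _ i (by simp [hij, hi])]
    have hslack (r) : (C *ᵥ (b - A *ᵥ x)) r ≤ 0 := by
      rw [mulVec_sub, mulVec_mulVec, Pi.sub_apply, sub_nonpos]
      exact hx r
    obtain ⟨γ, hγ⟩ := exists_le_mul_of_pairwise (s := b - A *ᵥ x) (a := fun k => A k j)
      (fun k hk => by simpa [C, fourierMotzkin_mulVec_inr] using hslack (.inr ⟨k, hk⟩))
      fun k l hk hl => by
        simpa [C, fourierMotzkin_mulVec_inl] using hslack (.inl ⟨(k, l), hk, hl⟩)
    refine ⟨x + γ • Pi.single j 1, fun k => ?_⟩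
    have := hγ k
    simp only [mulVec_add, mulVec_smul, mulVec_single_one, Pi.add_apply, Pi.smul_apply,
      Pi.sub_apply, col_apply, smul_eq_mul] at this ⊢
    linarith

end FourierMotzkin

section Polyhedron

variable {ι n : Type*} [Fintype n]

theorem Matrix.convex_setOf_mulVec_le (W : Matrix ι n ℝ) (b : ι → ℝ) :
    Convex ℝ {x | W *ᵥ x ≤ b} :=
  convex_halfSpace_le W.mulVecLin.isLinear b

theorem Matrix.isClosed_setOf_mulVec_le (W : Matrix ι n ℝ) (b : ι → ℝ) :
    IsClosed {x | W *ᵥ x ≤ b} :=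
  isClosed_le (continuous_const.matrix_mulVec continuous_id) continuous_const

/-- Two extreme points of a polyhedron with the same active constraints coincide: otherwise the
line through them stays in the polyhedron on both sides of the first one. -/
theorem Matrix.finite_extremePoints_setOf_mulVec_le [Finite ι] (W : Matrix ι n ℝ) (b : ι → ℝ) :
    ({x | W *ᵥ x ≤ b}.extremePoints ℝ).Finite := by
  refine Set.Finite.of_injOn (f := fun x => {i | (W *ᵥ x) i = b i}) (Set.mapsTo_univ _ _)
    (fun x hx y _ hxy => ?_) Set.finite_univ
  have hactive (i) (hi : (W *ᵥ x) i = b i) : (W *ᵥ (y - x)) i = 0 := by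
    have : (W *ᵥ y) i = b i := (Set.ext_iff.1 hxy i).1 hi
    simp [mulVec_sub, this, hi]
  have hline : ∀ᶠ t in 𝓝 (0 : ℝ), W *ᵥ (x + t • (y - x)) ≤ b := by
    simp only [Pi.le_def, eventually_all, mulVec_add, mulVec_smul, Pi.add_apply, Pi.smul_apply,
      smul_eq_mul]
    intro i
    rcases (hx.1 i).eq_or_lt with hi | hi
    · simp [hactive i hi, hi]
    · exact (Continuous.tendsto (by fun_prop) 0).eventually_le_const (by simpa using hi)
  obtain ⟨ε, hε, hball⟩ := Metric.eventually_nhds_iff.1 hline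
  have hmem (t : ℝ) (ht : |t| < ε) : x + t • (y - x) ∈ {x | W *ᵥ x ≤ b} :=
    hball (by simpa using ht)
  have hε2 : |ε / 2| < ε := by rw [abs_of_pos (by positivity)]; linarith
  have := hx.2 (hmem (-(ε / 2)) (by rwa [abs_neg])) (hmem (ε / 2) hε2)
    ⟨1 / 2, 1 / 2, by norm_num, by norm_num, by norm_num, by module⟩
  simpa [(half_pos hε).ne, sub_eq_zero, eq_comm] using this

theorem dotProduct_le_of_mem_convexHull {s : Set (n → ℝ)} {w : n → ℝ} {d : ℝ}
    (h : ∀ x ∈ s, x ⬝ᵥ w ≤ d) {x : n → ℝ} (hx : x ∈ convexHull ℝ s) : x ⬝ᵥ w ≤ d :=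
  convexHull_min h
    (convex_halfSpace_le ⟨fun x y => add_dotProduct x y w, fun r x => smul_dotProduct r x w⟩ d)
    hx

end Polyhedron

theorem convexHull_extremePoints_eq_of_finite {E : Type*} [AddCommGroup E] [Module ℝ E]
    [TopologicalSpace E] [IsTopologicalAddGroup E] [ContinuousSMul ℝ E] [LocallyConvexSpace ℝ E]
    [T2Space E] {s : Set E} (hcomp : IsCompact s) (hconv : Convex ℝ s)
    (hfin : (s.extremePoints ℝ).Finite) : convexHull ℝ (s.extremePoints ℝ) = s :=
  (hfin.isClosed_convexHull ℝ).closure_eq.symm.trans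
    (closure_convexHull_extremePoints hcomp hconv)

section BestReply

variable [Fintype Ω] [Fintype A] {u v : A → Ω → ℝ} {π : Ω → ℝ}

theorem pay_eq_sum_payP (u : A → Ω → ℝ) (α : A → ℝ) (π : Ω → ℝ) :
    pay u α π = ∑ a, α a * payP u a π := by
  simp only [pay, payP, mul_sum, mul_assoc]

theorem pay_single [DecidableEq A] (u : A → Ω → ℝ) (a : A) (π : Ω → ℝ) :
    pay u (Pi.single a 1) π = payP u a π := by
  simp [pay_eq_sum_payP, Pi.single_apply]

theorem pay_le_of_forall_payP_le {α : A → ℝ} (hα : α ∈ stdSimplex ℝ A) {B : ℝ}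
    (hB : ∀ a, α a ≠ 0 → payP u a π ≤ B) : pay u α π ≤ B :=
  calc pay u α π = ∑ a, α a * payP u a π := pay_eq_sum_payP u α π
    _ ≤ ∑ a, α a * B := sum_le_sum fun a _ => by
        rcases eq_or_ne (α a) 0 with h | h
        · simp [h]
        · exact mul_le_mul_of_nonneg_left (hB a h) (hα.1 a)
    _ = B := by rw [← sum_mul, hα.2, one_mul]

theorem br_nonempty [Nonempty A] (v : A → Ω → ℝ) (π : Ω → ℝ) : (br v π).Nonempty := by
  obtain ⟨a, -, ha⟩ := exists_max_image univ (fun a => payP v a π) univ_nonempty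
  exact ⟨a, fun a' => ha a' (mem_univ a')⟩

theorem single_mem_BR [DecidableEq A] {a : A} (ha : a ∈ br v π) : Pi.single a 1 ∈ BR v π :=
  ⟨single_mem_stdSimplex ℝ a, fun _ hα' =>
    pay_single v a π ▸ pay_le_of_forall_payP_le hα' fun a' _ => ha a'⟩

theorem mem_br_of_mem_BR {α : A → ℝ} (hα : α ∈ BR v π) {a : A} (ha : α a ≠ 0) :
    a ∈ br v π := by
  classical
  by_contra hbr
  obtain ⟨a', ha'⟩ : ∃ a', payP v a π < payP v a' π := by simpa [br] using hbr
  obtain ⟨b, -, hb⟩ := exists_max_image univ (fun a => payP v a π) ⟨a, mem_univ a⟩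
  have hle := hα.2 _ (single_mem_stdSimplex ℝ b)
  rw [pay_single, pay_eq_sum_payP] at hle
  have hlt : ∑ k, α k * payP v k π < ∑ k, α k * payP v b π :=
    sum_lt_sum (fun k _ => mul_le_mul_of_nonneg_left (hb k (mem_univ k)) (hα.1.1 k))
      ⟨a, mem_univ a, mul_lt_mul_of_pos_left (ha'.trans_le (hb a' (mem_univ a')))
        ((hα.1.1 a).lt_of_ne' ha)⟩
  rw [← sum_mul, hα.1.2, one_mul] at hlt
  linarith

theorem isGreatest_ubar [Nonempty A] (u v : A → Ω → ℝ) (π : Ω → ℝ) :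
    IsGreatest ((fun a => payP u a π) '' br v π) (ubar u v π) := by
  classical
  obtain ⟨b, hb, hmax⟩ :=
    Set.exists_max_image _ (fun a => payP u a π) (Set.toFinite _) (br_nonempty v π)
  have : IsGreatest ((fun α => pay u α π) '' BR v π) (payP u b π) :=
    ⟨⟨_, single_mem_BR hb, pay_single u b π⟩, by
      rintro _ ⟨α, hα, rfl⟩
      exact pay_le_of_forall_payP_le hα.1 fun a ha => hmax a (mem_br_of_mem_BR hα ha)⟩
  rw [ubar, this.csSup_eq]
  exact ⟨⟨b, hb, rfl⟩, fun _ ⟨a, ha, h⟩ => h ▸ hmax a ha⟩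

end BestReply

section BestReplyRegion

variable [Fintype Ω]

def bestReplyRegion (v : A → Ω → ℝ) (a : A) : Set (Ω → ℝ) :=
  {π ∈ stdSimplex ℝ Ω | a ∈ br v π}

theorem bestReplyRegion_eq_setOf_mulVec_le (v : A → Ω → ℝ) (a : A) :
    ∃ (W : Matrix (Ω ⊕ Fin 2 ⊕ A) Ω ℝ) (b : Ω ⊕ Fin 2 ⊕ A → ℝ),
      bestReplyRegion v a = {π | W *ᵥ π ≤ b} := by
  classical
  refine ⟨fromRows (-1) (fromRows (of ![1, -1]) (of fun a' => v a' - v a)),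
    Sum.elim 0 (Sum.elim ![1, -1] 0), ?_⟩
  ext π
  simp only [bestReplyRegion, stdSimplex, br, payP, fromRows_mulVec, Pi.le_def, Sum.forall,
    Fin.forall_fin_two, neg_mulVec, one_mulVec]
  simp [mulVec, dotProduct, mul_sub, sum_sub_distrib, mul_comm, le_antisymm_iff, and_assoc]

theorem finite_extremePoints_bestReplyRegion [Finite A] (v : A → Ω → ℝ) (a : A) :
    ((bestReplyRegion v a).extremePoints ℝ).Finite := by
  obtain ⟨W, b, h⟩ := bestReplyRegion_eq_setOf_mulVec_le v a
  exact h ▸ W.finite_extremePoints_setOf_mulVec_le b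

theorem convexHull_extremePoints_bestReplyRegion [Finite A] (v : A → Ω → ℝ) (a : A) :
    convexHull ℝ ((bestReplyRegion v a).extremePoints ℝ) = bestReplyRegion v a := by
  obtain ⟨W, b, h⟩ := bestReplyRegion_eq_setOf_mulVec_le v a
  refine convexHull_extremePoints_eq_of_finite ?_ (h ▸ W.convex_setOf_mulVec_le b)
    (finite_extremePoints_bestReplyRegion v a)
  exact (isCompact_stdSimplex ℝ Ω).of_isClosed_subset (h ▸ W.isClosed_setOf_mulVec_le b)
    fun _ hπ => hπ.1

end BestReplyRegion

section Splitting

variable [Fintype Ω] [Fintype A] {u v : A → Ω → ℝ} {S : Type*} [Fintype S] {lam : S → ℝ}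
  {p : S → Ω → ℝ} {prior : Ω → ℝ}

theorem IsSplitting.sum_mul_dotProduct_add (h : IsSplitting lam p prior) (c : Ω → ℝ) (d : ℝ) :
    ∑ s, lam s * (c ⬝ᵥ p s + d) = c ⬝ᵥ prior + d := by
  obtain ⟨-, hlam, -, hbar⟩ := h
  simp only [mul_add, sum_add_distrib, ← sum_mul, hlam, one_mul, dotProduct, mul_sum]
  rw [sum_comm]
  simp only [← hbar, mul_sum, mul_left_comm]

/-- Drop the null weights and reindex by `Fin` to get a splitting as in `IsOptimalSplitting`. -/
theorem IsOptimalSplitting.sum_mul_ubar_le (hopt : IsOptimalSplitting u v lam p prior)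
    {κ : Type*} [Fintype κ] {μ : κ → ℝ} {q : κ → Ω → ℝ} (hμ : ∀ k, 0 ≤ μ k)
    (hμ1 : ∑ k, μ k = 1) (hq : ∀ k, q k ∈ stdSimplex ℝ Ω)
    (hbar : ∀ ω, ∑ k, μ k * q k ω = prior ω) :
    ∑ k, μ k * ubar u v (q k) ≤ ∑ s, lam s * ubar u v (p s) := by
  classical
  obtain ⟨k₀, hk₀⟩ : ∃ k, μ k ≠ 0 := by
    by_contra! h
    simp [h] at hμ1
  let e := (Fintype.equivFin {k // μ k ≠ 0}).symm
  have hsum (g : κ → ℝ) : ∑ t, μ (e t) * g (e t) = ∑ k, μ k * g k := by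
    rw [e.sum_comp (fun k => μ k * g k),
      ← sum_subtype (univ.filter (μ · ≠ 0)) (by simp) (fun k => μ k * g k),
      sum_filter_of_ne fun k _ h => left_ne_zero_of_mul h]
  have := @hopt.2 (Fin _) _ ⟨e.symm ⟨k₀, hk₀⟩⟩ (fun t => μ (e t)) (fun t => q (e t))
    ⟨fun t => (hμ _).lt_of_ne' (e t).2, by simpa [hμ1] using hsum 1, fun t => hq _,
      fun ω => (hsum (q · ω)).trans (hbar ω)⟩
  rwa [hsum fun k => ubar u v (q k)] at this

theorem IsOptimalSplitting.sum_mul_ubar_le_mul (hopt : IsOptimalSplitting u v lam p prior)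
    {κ : Type*} [Fintype κ] {μ : κ → ℝ} {q : κ → Ω → ℝ} (hμ : ∀ k, 0 ≤ μ k)
    (hq : ∀ k, q k ∈ stdSimplex ℝ Ω) (hbar : ∀ ω, ∑ k, μ k * q k ω = (∑ k, μ k) * prior ω) :
    ∑ k, μ k * ubar u v (q k) ≤ (∑ k, μ k) * ∑ s, lam s * ubar u v (p s) := by
  rcases (sum_nonneg fun k _ => hμ k : 0 ≤ ∑ k, μ k).eq_or_lt with hσ | hσ
  · have hμ0 := (sum_eq_zero_iff_of_nonneg fun k _ => hμ k).1 hσ.symm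
    simp [hμ0]
  · have := hopt.sum_mul_ubar_le (μ := fun k => μ k / ∑ k, μ k)
      (fun k => div_nonneg (hμ k) hσ.le) (by rw [← sum_div, div_self hσ.ne']) hq
      (fun ω => by
        simp only [div_mul_eq_mul_div, ← sum_div, hbar, mul_div_cancel_left₀ _ hσ.ne'])
    simp only [div_mul_eq_mul_div, ← sum_div] at this
    rwa [div_le_iff₀ hσ, mul_comm] at this

theorem IsOptimalSplitting.exists_extremePoints_le [Nonempty A]
    (hopt : IsOptimalSplitting u v lam p prior) :
    ∃ c : Ω → ℝ, ∀ a, ∀ π ∈ (bestReplyRegion v a).extremePoints ℝ,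
      π ⬝ᵥ (u a - c) ≤ ∑ s, lam s * ubar u v (p s) - prior ⬝ᵥ c := by
  classical
  set M := ∑ s, lam s * ubar u v (p s)
  let κ := Σ a, (bestReplyRegion v a).extremePoints ℝ
  have : Finite κ := by
    have (a : A) := (finite_extremePoints_bestReplyRegion v a).to_subtype
    infer_instance
  have := Fintype.ofFinite κ
  have hκ (k : κ) : (k.2 : Ω → ℝ) ∈ bestReplyRegion v k.1 := k.2.2.1
  obtain ⟨c, hc⟩ := exists_le_mulVec_of_forall_vecMul_eq_zero
    (of fun k : κ => (k.2 : Ω → ℝ) - prior) (fun k => payP u k.1 k.2 - M) fun μ hμ hμX => by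
      have hbar (ω : Ω) : ∑ k, μ k * (k.2 : Ω → ℝ) ω = (∑ k, μ k) * prior ω := by
        have := congrFun hμX ω
        simp only [vecMul, dotProduct, of_apply, Pi.sub_apply, mul_sub, sum_sub_distrib,
          Pi.zero_apply, sub_eq_zero, ← sum_mul] at this
        exact this
      have hopt' := hopt.sum_mul_ubar_le_mul hμ (fun k => (hκ k).1) hbar
      have hpay : ∑ k, μ k * payP u k.1 k.2 ≤ ∑ k, μ k * ubar u v k.2 :=
        sum_le_sum fun k _ => mul_le_mul_of_nonneg_left
          ((isGreatest_ubar u v _).2 ⟨k.1, (hκ k).2, rfl⟩) (hμ k)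
      simp only [dotProduct, mul_sub, sum_sub_distrib, ← sum_mul]
      linarith
  refine ⟨c, fun a π hπ => ?_⟩
  have := hc ⟨a, π, hπ⟩
  simp only [mulVec, of_apply, sub_dotProduct] at this
  change π ⬝ᵥ u a - M ≤ _ at this
  rw [dotProduct_sub]
  linarith

theorem IsOptimalSplitting.exists_supporting_affine [Nonempty A]
    (hopt : IsOptimalSplitting u v lam p prior) :
    ∃ (c : Ω → ℝ) (d : ℝ), (∀ π ∈ stdSimplex ℝ Ω, ubar u v π ≤ c ⬝ᵥ π + d) ∧
      c ⬝ᵥ prior + d = ∑ s, lam s * ubar u v (p s) := by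
  obtain ⟨c, hc⟩ := hopt.exists_extremePoints_le
  refine ⟨c, ∑ s, lam s * ubar u v (p s) - prior ⬝ᵥ c, fun π hπ => ?_, by
    rw [dotProduct_comm]; ring⟩
  obtain ⟨⟨a, ha, hua⟩, -⟩ := isGreatest_ubar u v π
  have := dotProduct_le_of_mem_convexHull (hc a)
    (by rw [convexHull_extremePoints_bestReplyRegion]; exact ⟨hπ, ha⟩)
  rw [dotProduct_sub] at this
  rw [← hua, dotProduct_comm c]
  change π ⬝ᵥ u a ≤ _
  linarith

end Splitting

theorem eq_of_le_of_sum_mul_le {ι : Type*} [Fintype ι] {w f g : ι → ℝ} (hw : ∀ i, 0 < w i)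
    (hfg : ∀ i, f i ≤ g i) (h : ∑ i, w i * g i ≤ ∑ i, w i * f i) (i : ι) : f i = g i := by
  by_contra hne
  exact (sum_lt_sum (fun j _ => mul_le_mul_of_nonneg_left (hfg j) (hw j).le)
    ⟨i, mem_univ i, mul_lt_mul_of_pos_left ((hfg i).lt_of_ne hne) (hw i)⟩).not_ge h

theorem supporting_hyperplane_general {Ω A S : Type*} [Fintype Ω] [Fintype A] [Nonempty A]
    [Fintype S] (u v : A → Ω → ℝ) (prior : Ω → ℝ)
    (lam : S → ℝ) (p : S → Ω → ℝ) (hopt : IsOptimalSplitting u v lam p prior) :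
    ∃ (c : Ω → ℝ) (d : ℝ),
      (∀ π ∈ stdSimplex ℝ Ω, ubar u v π ≤ (∑ ω, c ω * π ω) + d) ∧
      ∀ s, (∑ ω, c ω * p s ω) + d = ubar u v (p s) := by
  obtain ⟨c, d, hle, hprior⟩ := hopt.exists_supporting_affine
  obtain ⟨hlam, -, hp, -⟩ := hopt.1
  refine ⟨c, d, hle, fun s => (eq_of_le_of_sum_mul_le hlam (fun s => hle _ (hp s)) ?_ s).symm⟩
  rw [hopt.1.sum_mul_dotProduct_add, hprior]

/-- Supporting hyperplane step in the proof of Claim 1. -/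
theorem supporting_hyperplane {Ω A S : Type*} [Fintype Ω] [Nonempty Ω] [Fintype A] [Nonempty A]
    [Fintype S] [Nonempty S] (u v : A → Ω → ℝ) (prior : Ω → ℝ) (hprior : prior ∈ stdSimplex ℝ Ω)
    (lam : S → ℝ) (p : S → Ω → ℝ) (hopt : IsOptimalSplitting u v lam p prior) :
    ∃ (c : Ω → ℝ) (d : ℝ),
      (∀ π ∈ stdSimplex ℝ Ω, ubar u v π ≤ (∑ ω, c ω * π ω) + d) ∧
      ∀ s, (∑ ω, c ω * p s ω) + d = ubar u v (p s) :=
  supporting_hyperplane_general u v prior lam p hopt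
end
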